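/- Fix an integer g ≥ 1 and two distinct indices r, s ∈ {1,…,2g+1}. Then, in the polynomial ring ℤ[e₁,…,e_{2g+1}], the polynomial F(e_r, e_s), obtained by evaluating the Kleinian 2-polar F(x,z) at x = e_r and z = e_s, is divisible by (e_r − e_s)². -/

import Mathlib

/-! Put `f(t) = Σ_{i ≤ 2g+1} λᵢ tⁱ = 4 ∏ⱼ (t − eⱼ)`. Termwise,
`xᵏzᵏ(2a + b(x+z)) − (a x²ᵏ + b x²ᵏ⁺¹) − (a z²ᵏ + b z²ᵏ⁺¹)
  = −a (xᵏ − zᵏ)² − b (xᵏ − zᵏ)(xᵏ⁺¹ − zᵏ⁺¹)`,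
and `x − z` divides both `xᵏ − zᵏ` and `xᵏ⁺¹ − zᵏ⁺¹`, so `F(x, z) ≡ f(x) + f(z)` modulo `(x − z)²`.
Since every `eⱼ` is a root of `f`, `F(e_r, e_s)` is divisible by `(e_r − e_s)²`. -/

open MvPolynomial Finset

noncomputable section

/-- The coefficients λ_m defined by `4∏_{j}(x−e_j) = 4x^{2g+1} + Σ_{i=0}^{2g} λᵢ xⁱ`
(with λ_{2g+1} = 4), i.e. `λ_m = 4(−1)^{2g+1−m} σ_{2g+1−m}(e₁,…,e_{2g+1})`,
as a polynomial in ℤ[e₁,…,e_{2g+1}]. -/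
def lamZ (g : ℕ) (m : ℕ) : MvPolynomial (Fin (2 * g + 1)) ℤ :=
  4 * (-1) ^ (2 * g + 1 - m) *
    ((Finset.univ : Finset (Fin (2 * g + 1))).val.map X).esymm (2 * g + 1 - m)

/-- The Kleinian 2-polar `F(x,z) = Σ_{k=0}^{g} x^k z^k (2λ_{2k} + λ_{2k+1}(x+z))`,
evaluated at elements `x, z` of ℤ[e₁,…,e_{2g+1}]. -/
def kleinPolarZ (g : ℕ) (x z : MvPolynomial (Fin (2 * g + 1)) ℤ) :
    MvPolynomial (Fin (2 * g + 1)) ℤ :=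
  ∑ k ∈ Finset.range (g + 1),
    x ^ k * z ^ k * (2 * lamZ g (2 * k) + lamZ g (2 * k + 1) * (x + z))

open Polynomial in
theorem Multiset.sum_range_esymm_mul_pow_eq_zero {R : Type*} [CommRing R] (s : Multiset R)
    {t : R} (ht : t ∈ s) :
    ∑ i ∈ Finset.range (Multiset.card s + 1),
      (-1) ^ (Multiset.card s - i) * s.esymm (Multiset.card s - i) * t ^ i = 0 := by
  have hroot : (s.map fun a => Polynomial.X - Polynomial.C a).prod.eval t = 0 := by
    rw [eval_multiset_prod]
    exact Multiset.prod_eq_zero (Multiset.mem_map.2 ⟨_, Multiset.mem_map_of_mem _ ht, by simp⟩)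
  have hdeg : (s.map fun a => Polynomial.X - Polynomial.C a).prod.natDegree ≤ Multiset.card s := by
    refine (natDegree_multiset_prod_le _).trans ?_
    refine (Multiset.sum_le_card_nsmul _ 1 ?_).trans (by simp)
    simp only [Multiset.map_map, Multiset.mem_map]
    rintro _ ⟨a, -, rfl⟩
    exact natDegree_X_sub_C_le a
  rw [← hroot, eval_eq_sum_range' (Nat.lt_succ_of_le hdeg)]
  refine sum_congr rfl fun i hi => ?_
  rw [Multiset.prod_X_sub_C_coeff s (Nat.lt_succ_iff.1 (mem_range.1 hi))]

theorem Finset.sum_range_two_mul {M : Type*} [AddCommMonoid M] (n : ℕ) (f : ℕ → M) :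
    ∑ i ∈ range (2 * n), f i = ∑ k ∈ range n, (f (2 * k) + f (2 * k + 1)) := by
  induction n with
  | zero => simp
  | succ n ih => rw [Nat.mul_succ, sum_range_succ, sum_range_succ, sum_range_succ, ih, add_assoc]

section Polar

variable {R : Type*} [CommRing R]

theorem sq_sub_dvd_polar_term_sub (x z a b : R) (k : ℕ) :
    (x - z) ^ 2 ∣ x ^ k * z ^ k * (2 * a + b * (x + z))
      - (a * x ^ (2 * k) + b * x ^ (2 * k + 1)) - (a * z ^ (2 * k) + b * z ^ (2 * k + 1)) := by
  obtain ⟨c, hc⟩ := sub_dvd_pow_sub_pow x z k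
  obtain ⟨d, hd⟩ := sub_dvd_pow_sub_pow x z (k + 1)
  have key : x ^ k * z ^ k * (2 * a + b * (x + z))
      - (a * x ^ (2 * k) + b * x ^ (2 * k + 1)) - (a * z ^ (2 * k) + b * z ^ (2 * k + 1))
      = -a * (x ^ k - z ^ k) ^ 2 - b * (x ^ k - z ^ k) * (x ^ (k + 1) - z ^ (k + 1)) := by
    ring
  rw [key, hc, hd]
  exact ⟨-a * c ^ 2 - b * c * d, by ring⟩

theorem sq_sub_dvd_polar_sub (c : ℕ → R) (n : ℕ) (x z : R) :
    (x - z) ^ 2 ∣ ∑ k ∈ range n, x ^ k * z ^ k * (2 * c (2 * k) + c (2 * k + 1) * (x + z))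
      - ∑ i ∈ range (2 * n), c i * x ^ i - ∑ i ∈ range (2 * n), c i * z ^ i := by
  rw [sum_range_two_mul, sum_range_two_mul, ← sum_sub_distrib, ← sum_sub_distrib]
  exact dvd_sum fun k _ => sq_sub_dvd_polar_term_sub x z _ _ k

end Polar

theorem sum_lamZ_mul_pow_eq_zero (g : ℕ) (u : Fin (2 * g + 1)) :
    ∑ i ∈ range (2 * (g + 1)), lamZ g i * (X u : MvPolynomial (Fin (2 * g + 1)) ℤ) ^ i = 0 := by
  set s : Multiset (MvPolynomial (Fin (2 * g + 1)) ℤ) := (univ : Finset (Fin (2 * g + 1))).val.map X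
  have hcard : Multiset.card s = 2 * g + 1 := by simp [s]
  have := s.sum_range_esymm_mul_pow_eq_zero (Multiset.mem_map_of_mem _ (mem_univ_val u))
  rw [hcard] at this
  rw [show 2 * (g + 1) = 2 * g + 1 + 1 by ring, ← mul_zero 4, ← this, mul_sum]
  refine sum_congr rfl fun i _ => ?_
  rw [lamZ]
  ring

theorem klein_polar_divisible_general (g : ℕ)
    (r s : Fin (2 * g + 1)) :
    ((X r - X s : MvPolynomial (Fin (2 * g + 1)) ℤ)) ^ 2 ∣
      kleinPolarZ g (X r) (X s) := by
  have := sq_sub_dvd_polar_sub (lamZ g) (g + 1) (X r) (X s)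
  rwa [sum_lamZ_mul_pow_eq_zero, sum_lamZ_mul_pow_eq_zero, sub_zero, sub_zero] at this

theorem klein_polar_divisible (g : ℕ) (hg : 1 ≤ g)
    (r s : Fin (2 * g + 1)) (hrs : r ≠ s) :
    ((X r - X s : MvPolynomial (Fin (2 * g + 1)) ℤ)) ^ 2 ∣
      kleinPolarZ g (X r) (X s) :=
  klein_polar_divisible_general g r s
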